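/- arXiv:1710.00733 — 3 statements merged into one kernel-verified Lean document; each statement's English description precedes it below -/
import Mathlib

section
/- Let r₁ > 0 satisfy tanh(r₁)·r₁ ≥ log 8. Then for all points p, q in the hyperbolic plane ℍ², the closed hyperbolic ball of radius d(p,q)/2 − r₁ centered at the midpoint m of the geodesic segment [p,q] is contained in every open hyperbolic ball having both p and q on its boundary. -/
/-!
Send `z ∈ ℍ` to `z.im⁻¹ • (1, z.re, |z|²)`, a point of the hyperboloid `lightConeForm u u = 1`;
then `cosh (dist z w)` is the Minkowski product of the images. Two points of the hyperboloid
have product `1` only if they coincide, and this pins down the image of the midpoint `m` of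
`p q` as `(p + q) / (2 cosh (d(p, q) / 2))`. By linearity,
`cosh d(c, m) · cosh (d(p, q) / 2) = cosh R` when `c` is at distance `R` from `p` and `q`; bounding
both `cosh`s on the left below by `exp / 2` and `cosh R` above by `exp R` gives
`d(c, m) ≤ R + log 4 - d(p, q) / 2`. Since `tanh r₁ < 1`, `r₁ > log 8 > log 4`, and the triangle
inequality through `m` finishes.
-/

open UpperHalfPlane Metric Real

noncomputable def lightConeForm : LinearMap.BilinForm ℝ (Fin 3 → ℝ) :=
  LinearMap.mk₂ ℝ (fun u w => (u 0 * w 2 + u 2 * w 0) / 2 - u 1 * w 1)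
    (fun _ _ _ => by simp only [Pi.add_apply]; ring)
    (fun _ _ _ => by simp only [Pi.smul_apply, smul_eq_mul]; ring)
    (fun _ _ _ => by simp only [Pi.add_apply]; ring)
    (fun _ _ _ => by simp only [Pi.smul_apply, smul_eq_mul]; ring)

theorem lightConeForm_apply (u w : Fin 3 → ℝ) :
    lightConeForm u w = (u 0 * w 2 + u 2 * w 0) / 2 - u 1 * w 1 := rfl

theorem eq_of_lightConeForm_eq_one {u w : Fin 3 → ℝ}
    (hu : lightConeForm u u = 1) (hw : lightConeForm w w = 1) (huw : lightConeForm u w = 1) :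
    u = w := by
  simp only [lightConeForm_apply] at hu hw huw
  -- the equality case of the reverse Cauchy–Schwarz inequality
  have key : (u 0 - w 0) ^ 2 + (u 0 * w 1 - w 0 * u 1) ^ 2 = 0 := by
    linear_combination (2 * u 0 * w 0) * huw - w 0 ^ 2 * hu - u 0 ^ 2 * hw
  have h₀ : u 0 = w 0 := by nlinarith [sq_nonneg (u 0 - w 0), sq_nonneg (u 0 * w 1 - w 0 * u 1)]
  have hw₀ : w 0 ≠ 0 := by
    rintro h
    rw [h] at hw
    nlinarith [sq_nonneg (w 1)]
  have h₁ : u 1 = w 1 := by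
    rw [h₀] at key
    have : w 0 * (w 1 - u 1) = 0 := by nlinarith [sq_nonneg (w 0 * (w 1 - u 1))]
    have := (mul_eq_zero.1 this).resolve_left hw₀
    linarith
  have h₂ : u 2 = w 2 := by
    rw [h₀, h₁] at hu
    exact mul_left_cancel₀ hw₀ (by linarith)
  ext i
  fin_cases i <;> assumption

theorem lightConeForm_comm (u w : Fin 3 → ℝ) : lightConeForm u w = lightConeForm w u := by
  simp only [lightConeForm_apply]; ring

namespace UpperHalfPlane

noncomputable def toHyperboloid (z : ℍ) : Fin 3 → ℝ := z.im⁻¹ • ![1, z.re, z.re ^ 2 + z.im ^ 2]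

theorem cosh_dist_eq_lightConeForm (z w : ℍ) :
    cosh (dist z w) = lightConeForm (toHyperboloid z) (toHyperboloid w) := by
  rw [cosh_dist', lightConeForm_apply]
  simp only [toHyperboloid, Fin.isValue, Pi.smul_apply, Matrix.cons_val_zero, smul_eq_mul,
    mul_one, Matrix.cons_val, Matrix.cons_val_one]
  field_simp
  ring

theorem lightConeForm_toHyperboloid_self (z : ℍ) :
    lightConeForm (toHyperboloid z) (toHyperboloid z) = 1 := by
  rw [← cosh_dist_eq_lightConeForm, dist_self, cosh_zero]

theorem toHyperboloid_midpoint {p q m : ℍ} (hm₁ : dist p m = dist p q / 2)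
    (hm₂ : dist m q = dist p q / 2) :
    toHyperboloid m = (2 * cosh (dist p q / 2))⁻¹ • (toHyperboloid p + toHyperboloid q) := by
  set s := cosh (dist p q / 2)
  have hs : 0 < s := cosh_pos _
  have hpm : lightConeForm (toHyperboloid m) (toHyperboloid p) = s := by
    rw [← cosh_dist_eq_lightConeForm, dist_comm, hm₁]
  have hqm : lightConeForm (toHyperboloid m) (toHyperboloid q) = s := by
    rw [← cosh_dist_eq_lightConeForm, hm₂]
  have hpq : lightConeForm (toHyperboloid p) (toHyperboloid q) = 2 * s ^ 2 - 1 := by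
    rw [← cosh_dist_eq_lightConeForm, show dist p q = 2 * (dist p q / 2) by ring, cosh_two_mul,
      sinh_sq]
    ring
  apply eq_of_lightConeForm_eq_one (lightConeForm_toHyperboloid_self m)
  · simp only [map_smul, map_add, LinearMap.smul_apply, LinearMap.add_apply,
      lightConeForm_toHyperboloid_self, lightConeForm_comm (toHyperboloid q), hpq, smul_eq_mul]
    field_simp
    ring
  · simp only [map_smul, map_add, hpm, hqm, smul_eq_mul]
    field_simp
    ring

theorem cosh_dist_midpoint_mul_cosh_half_dist (c : ℍ) {p q m : ℍ}
    (hm₁ : dist p m = dist p q / 2) (hm₂ : dist m q = dist p q / 2) :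
    cosh (dist c m) * cosh (dist p q / 2) = (cosh (dist c p) + cosh (dist c q)) / 2 := by
  have hs := (cosh_pos (dist p q / 2)).ne'
  simp only [cosh_dist_eq_lightConeForm, toHyperboloid_midpoint hm₁ hm₂, map_smul, map_add,
    smul_eq_mul]
  field_simp

theorem dist_midpoint_le_of_dist_eq {c p q m : ℍ} {R : ℝ}
    (hm₁ : dist p m = dist p q / 2) (hm₂ : dist m q = dist p q / 2)
    (hp : dist c p = R) (hq : dist c q = R) :
    dist c m ≤ R + log 4 - dist p q / 2 := by
  have hR : 0 ≤ R := hp ▸ dist_nonneg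
  have hcosh := cosh_dist_midpoint_mul_cosh_half_dist c hm₁ hm₂
  rw [hp, hq, add_self_div_two] at hcosh
  have exp_half_le_cosh (x : ℝ) : exp x / 2 ≤ cosh x := by
    rw [cosh_eq]; linarith [exp_pos (-x)]
  have hexp : exp (dist c m + dist p q / 2) ≤ exp (log 4 + R) := calc
    exp (dist c m + dist p q / 2) = 4 * (exp (dist c m) / 2 * (exp (dist p q / 2) / 2)) := by
      rw [exp_add]; ring
    _ ≤ 4 * cosh R := by
      rw [← hcosh]
      gcongr <;> exact exp_half_le_cosh _
    _ ≤ exp (log 4 + R) := by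
      rw [exp_add, exp_log four_pos, ← exp_sub_sinh]
      linarith [sinh_nonneg_iff.2 hR]
  linarith [exp_le_exp.1 hexp]

end UpperHalfPlane

theorem log_four_lt_of_log_eight_le_tanh_mul {r : ℝ} (hr : 0 < r) (h : log 8 ≤ tanh r * r) :
    log 4 < r := calc
  log 4 < log 8 := log_lt_log four_pos (by norm_num)
  _ ≤ tanh r * r := h
  _ < r := mul_lt_of_lt_one_left hr (tanh_lt_one r)

/-- Let `r₁ > 0` satisfy `tanh r₁ * r₁ ≥ log 8`.  Then for all points `p q` in the
hyperbolic plane (upper half-plane model), the closed hyperbolic ball of radius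
`d(p,q)/2 − r₁` centered at the midpoint `m` of `p` and `q` is contained in every
open hyperbolic ball having both `p` and `q` on its boundary. -/
theorem thick_intersection_of_balls (r₁ : ℝ) (hr₁ : 0 < r₁)
    (hr₁' : Real.tanh r₁ * r₁ ≥ Real.log 8) (p q m : ℍ)
    (hm₁ : dist p m = dist p q / 2) (hm₂ : dist m q = dist p q / 2)
    (c : ℍ) (R : ℝ) (hp : dist c p = R) (hq : dist c q = R) :
    closedBall m (dist p q / 2 - r₁) ⊆ ball c R := by
  intro z hz
  have hcm := dist_midpoint_le_of_dist_eq hm₁ hm₂ hp hq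
  have hr := log_four_lt_of_log_eight_le_tanh_mul hr₁ hr₁'
  rw [mem_closedBall] at hz
  rw [mem_ball]
  calc dist z c ≤ dist z m + dist c m := dist_comm m c ▸ dist_triangle z m c
    _ < R := by linarith
end

section
/- Let (X_n)_{n≥1} be random variables with values in a complete separable metric space, converging almost surely to a random variable X. Let ν_n be the law of X_n and ν the law of X. Suppose there exist α > 0, positive random variables C and D with D ≤ 1 a.s., and a deterministic sequence r_n → 0 of positive radii, such that almost surely d(X_n, X) ≤ C·r_n and ν_n(B_{r_n}(X_n)) ≥ D·r_n^α for all n. Then the (upper Hausdorff) dimension of ν is at most α. -/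
/-!
Fix `s > α` and `δ > 0`, and call `x` thin if `ν(B_q(x)) ≤ q ^ s` at all rational radii
`q ∈ (0, δ]`. Outside the thin sets the local dimension is at most `s`, so it suffices to show
that they are `ν`-null. Any ball of radius `ρ ≤ δ / 4` meets the thin set in `ν`-mass at most
`(4ρ) ^ s`. Let `S` be the event that `X` is thin, `C ≤ K` and `D ≥ 1 / K`. Counting the pairs
`(ω, ω')` with `ω ∈ S` and `d(X_n ω', X_n ω) < r_n` once from `ω` (each contributes mass at
least `r_n ^ α / K`) and once from `ω'` (then `X ω` is a thin point within `(K + 1) r_n` of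
`X_n ω'`) gives `ℙ(S) r_n ^ α / K ≤ (4 (K + 1) r_n) ^ s`, hence `ℙ(S) = 0` as `r_n → 0`.
-/

open MeasureTheory Filter Metric Topology Set
open scoped ENNReal

lemma liminf_log_div_log_le_of_frequently {f : ℝ → ℝ} (hf0 : ∀ ρ, 0 ≤ f ρ) (hf1 : ∀ ρ, f ρ ≤ 1)
    {s : ℝ} (h : ∃ᶠ ρ in 𝓝[>] 0, ρ ^ s < f ρ) :
    liminf (fun ρ => Real.log (f ρ) / Real.log ρ) (𝓝[>] 0) ≤ s := by
  have hsmall : ∀ᶠ ρ in 𝓝[>] (0 : ℝ), ρ ∈ Ioo 0 1 := Ioo_mem_nhdsGT one_pos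
  refine liminf_le_of_frequently_le ?_ ?_
  · refine (h.and_eventually hsmall).mono fun ρ ⟨hlt, hρ0, hρ1⟩ => ?_
    rw [div_le_iff_of_neg (Real.log_neg hρ0 hρ1), ← Real.log_rpow hρ0]
    exact Real.log_le_log (by positivity) hlt.le
  · exact isBoundedUnder_of_eventually_ge <| hsmall.mono fun ρ ⟨hρ0, hρ1⟩ =>
      div_nonneg_of_nonpos (Real.log_nonpos (hf0 ρ) (hf1 ρ)) (Real.log_neg hρ0 hρ1).le

lemma eq_zero_of_eventually_mul_ofReal_le {ι : Type*} {l : Filter ι} [l.NeBot] {x : ℝ≥0∞}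
    {a b : ι → ℝ} (ha : ∀ i, 0 < a i)
    (h : ∀ᶠ i in l, x * ENNReal.ofReal (a i) ≤ ENNReal.ofReal (b i))
    (hlim : Tendsto (fun i => b i / a i) l (𝓝 0)) : x = 0 := by
  have hx : ∀ᶠ i in l, x ≤ ENNReal.ofReal (b i / a i) := h.mono fun i hi => by
    rwa [ENNReal.ofReal_div_of_pos (ha i), ENNReal.le_div_iff_mul_le
      (.inl (ENNReal.ofReal_pos.2 (ha i)).ne') (.inl ENNReal.ofReal_ne_top)]
  simpa using ge_of_tendsto (ENNReal.tendsto_ofReal hlim) hx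

section Metric

variable {E : Type*} [MetricSpace E] [MeasurableSpace E]

lemma measurable_measure_ball [BorelSpace E] [SecondCountableTopology E] (μ : Measure E)
    [SFinite μ] (ρ : ℝ) : Measurable fun x => μ (ball x ρ) := by
  have hs : MeasurableSet {p : E × E | dist p.2 p.1 < ρ} :=
    measurableSet_lt (measurable_snd.dist measurable_fst) measurable_const
  simpa only [preimage_ofPred_eq, ball] using measurable_measure_prodMk_left (ν := μ) hs

/-- Rational radii keep this set measurable. -/
def thinSet (ν : Measure E) (s δ : ℝ) : Set E :=
  {x | ∀ q : ℚ, (q : ℝ) ∈ Ioc 0 δ → ν (ball x q) ≤ ENNReal.ofReal ((q : ℝ) ^ s)}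

variable {ν : Measure E} {s δ : ℝ}

lemma measurableSet_thinSet [BorelSpace E] [SecondCountableTopology E] [SFinite ν] :
    MeasurableSet (thinSet ν s δ) := by
  simp only [thinSet, ofPred_forall]
  exact .iInter fun q => .iInter fun _ =>
    measurableSet_le (measurable_measure_ball ν q) measurable_const

lemma thinSet_anti {δ' : ℝ} (h : δ' ≤ δ) : thinSet ν s δ ⊆ thinSet ν s δ' :=
  fun _ hx q hq => hx q ⟨hq.1, hq.2.trans h⟩

lemma measure_thinSet_inter_ball_le (hs : 0 ≤ s) {z : E} {ρ : ℝ} (h : 4 * ρ ≤ δ) :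
    ν (thinSet ν s δ ∩ ball z ρ) ≤ ENNReal.ofReal ((4 * ρ) ^ s) := by
  rcases (thinSet ν s δ ∩ ball z ρ).eq_empty_or_nonempty with hempty | ⟨x, hx, hxz⟩
  · simp [hempty]
  have hρ : 0 < ρ := pos_of_mem_ball hxz
  obtain ⟨q, hq2, hq4⟩ := exists_rat_btwn (by linarith : 2 * ρ < 4 * ρ)
  have hsub : thinSet ν s δ ∩ ball z ρ ⊆ ball x q := fun y ⟨_, hyz⟩ => by
    have := dist_triangle_right y x z
    rw [mem_ball] at hyz hxz ⊢
    linarith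
  calc ν (thinSet ν s δ ∩ ball z ρ) ≤ ν (ball x q) := measure_mono hsub
    _ ≤ ENNReal.ofReal ((q : ℝ) ^ s) := hx q ⟨by linarith, by linarith⟩
    _ ≤ ENNReal.ofReal ((4 * ρ) ^ s) :=
      ENNReal.ofReal_le_ofReal (Real.rpow_le_rpow (by linarith) hq4.le hs)

lemma frequently_rpow_lt_measure_ball [IsFiniteMeasure ν] {x : E}
    (h : ∀ δ > 0, x ∉ thinSet ν s δ) :
    ∃ᶠ ρ in 𝓝[>] 0, ρ ^ s < (ν (ball x ρ)).toReal := by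
  rw [frequently_iff]
  intro U hU
  obtain ⟨δ, hδ, hδU⟩ := mem_nhdsGT_iff_exists_Ioc_subset.1 hU
  have hx := h δ hδ
  simp only [thinSet, mem_ofPred_eq, not_forall, not_le] at hx
  obtain ⟨q, hq, hlt⟩ := hx
  exact ⟨q, hδU hq, (ENNReal.ofReal_lt_iff_lt_toReal (Real.rpow_nonneg hq.1.le s)
    (measure_ne_top _ _)).1 hlt⟩

lemma ae_frequently_rpow_lt_measure_ball [IsFiniteMeasure ν] {α : ℝ}
    (hnull : ∀ s, α < s → ∀ δ > 0, ν (thinSet ν s δ) = 0) :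
    ∀ᵐ x ∂ν, ∀ q : ℚ, α < q → ∃ᶠ ρ in 𝓝[>] 0, ρ ^ (q : ℝ) < (ν (ball x ρ)).toReal := by
  rw [ae_all_iff]
  intro q
  by_cases hq : α < q
  · have hnot : ∀ᵐ x ∂ν, ∀ j : ℕ, x ∉ thinSet ν q (1 / (j + 1)) := ae_all_iff.2 fun j =>
      measure_eq_zero_iff_ae_notMem.1 (hnull q hq _ (by positivity))
    filter_upwards [hnot] with x hx _
    refine frequently_rpow_lt_measure_ball fun δ hδ hmem => ?_
    obtain ⟨j, hj⟩ := exists_nat_one_div_lt hδ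
    exact hx j (thinSet_anti hj.le hmem)
  · exact .of_forall fun _ h => absurd h hq

theorem ae_liminf_log_measure_ball_div_log_le [IsZeroOrProbabilityMeasure ν] {α : ℝ}
    (hnull : ∀ s, α < s → ∀ δ > 0, ν (thinSet ν s δ) = 0) :
    ∀ᵐ x ∂ν, liminf (fun ρ => Real.log (ν (ball x ρ)).toReal / Real.log ρ) (𝓝[>] 0) ≤ α := by
  filter_upwards [ae_frequently_rpow_lt_measure_ball hnull] with x hx
  refine le_of_forall_gt_imp_ge_of_dense fun t ht => ?_
  obtain ⟨q, hαq, hqt⟩ := exists_rat_btwn ht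
  exact (liminf_log_div_log_le_of_frequently (fun _ => ENNReal.toReal_nonneg)
    (fun _ => measureReal_le_one) (hx q hαq)).trans hqt.le

end Metric

section Probability

variable {E : Type*} [MetricSpace E] [MeasurableSpace E]
  {Ω : Type*} [MeasurableSpace Ω] (P : Measure Ω)

lemma measure_mul_le_of_forall_ball [BorelSpace E] [SecondCountableTopology E]
    [IsProbabilityMeasure P] {Y Z : Ω → E} (hY : Measurable Y) {S : Set Ω}
    (hS : MeasurableSet S) {a ρ : ℝ} {m c : ℝ≥0∞}
    (hclose : ∀ ω ∈ S, dist (Y ω) (Z ω) ≤ a)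
    (hmass : ∀ ω ∈ S, m ≤ P.map Y (ball (Y ω) ρ))
    (hsmall : ∀ z, P (S ∩ Z ⁻¹' ball z (a + ρ)) ≤ c) :
    P S * m ≤ c := by
  set T : Set (Ω × Ω) := S ×ˢ univ ∩ {p | dist (Y p.2) (Y p.1) < ρ}
  have hT : MeasurableSet T := (hS.prod .univ).inter <|
    measurableSet_lt ((hY.comp measurable_snd).dist (hY.comp measurable_fst)) measurable_const
  have hleft : ∀ ω, S.indicator (fun _ => m) ω ≤ P (Prod.mk ω ⁻¹' T) := fun ω => by
    by_cases hω : ω ∈ S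
    · have hsec : Prod.mk ω ⁻¹' T = Y ⁻¹' ball (Y ω) ρ := by ext; simp [T, hω]
      rw [indicator_of_mem hω, hsec, ← Measure.map_apply hY measurableSet_ball]
      exact hmass ω hω
    · simp [hω]
  have hright : ∀ ω', P ((fun ω => (ω, ω')) ⁻¹' T) ≤ c := fun ω' => by
    have hsec : (fun ω => (ω, ω')) ⁻¹' T ⊆ S ∩ Z ⁻¹' ball (Y ω') (a + ρ) :=
      fun ω ⟨⟨hωS, _⟩, hd⟩ => by
        have := dist_triangle_left (Z ω) (Y ω') (Y ω)
        have := hclose ω hωS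
        rw [mem_ofPred_eq, dist_comm] at hd
        exact ⟨hωS, by rw [mem_preimage, mem_ball]; linarith⟩
    exact (measure_mono hsec).trans (hsmall (Y ω'))
  calc P S * m = ∫⁻ ω, S.indicator (fun _ => m) ω ∂P := by
        rw [lintegral_indicator_const hS, mul_comm]
    _ ≤ ∫⁻ ω, P (Prod.mk ω ⁻¹' T) ∂P := lintegral_mono hleft
    _ = ∫⁻ ω', P ((fun ω => (ω, ω')) ⁻¹' T) ∂P := by
        rw [← Measure.prod_apply hT, Measure.prod_apply_symm hT]
    _ ≤ ∫⁻ _, c ∂P := lintegral_mono hright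
    _ = c := by simp

variable (Y : ℕ → Ω → E) (Z : Ω → E) (r : ℕ → ℝ) (α : ℝ)

def controlledSet (K : ℝ) : Set Ω :=
  {ω | ∀ n, dist (Y n ω) (Z ω) ≤ K * r n ∧
    ENNReal.ofReal (r n ^ α / K) ≤ P.map (Y n) (ball (Y n ω) (r n))}

variable {P Y Z r α}

lemma measurableSet_controlledSet [BorelSpace E] [SecondCountableTopology E] [SFinite P]
    (hY : ∀ n, Measurable (Y n)) (hZ : Measurable Z) (K : ℝ) :
    MeasurableSet (controlledSet P Y Z r α K) := by
  simp only [controlledSet, ofPred_forall, ofPred_and]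
  exact .iInter fun n => (measurableSet_le ((hY n).dist hZ) measurable_const).inter
    (measurableSet_le measurable_const ((measurable_measure_ball _ _).comp (hY n)))

lemma ae_exists_mem_controlledSet {C D : Ω → ℝ} (hD : ∀ᵐ ω ∂P, 0 < D ω) (hr : ∀ n, 0 ≤ r n)
    (hclose : ∀ᵐ ω ∂P, ∀ n, dist (Y n ω) (Z ω) ≤ C ω * r n)
    (hmass : ∀ᵐ ω ∂P, ∀ n, D ω * r n ^ α ≤ ((P.map (Y n)) (ball (Y n ω) (r n))).toReal) :
    ∀ᵐ ω ∂P, ∃ K : ℕ, ω ∈ controlledSet P Y Z r α (K + 1) := by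
  filter_upwards [hD, hclose, hmass] with ω hDω hcl hm
  obtain ⟨K, hK⟩ := exists_nat_ge (max (C ω) (D ω)⁻¹)
  have hCK : C ω ≤ K + 1 := by linarith [le_max_left (C ω) (D ω)⁻¹]
  have hDK : 1 ≤ D ω * (K + 1) :=
    (inv_le_iff_one_le_mul₀' hDω).1 (by linarith [le_max_right (C ω) (D ω)⁻¹])
  refine ⟨K, fun n => ⟨(hcl n).trans (mul_le_mul_of_nonneg_right hCK (hr n)), ?_⟩⟩
  refine ENNReal.ofReal_le_of_le_toReal ((div_le_iff₀ (by positivity)).2 ?_ |>.trans (hm n))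
  nlinarith [Real.rpow_nonneg (hr n) α]

lemma measure_controlledSet_inter_thinSet_eq_zero [BorelSpace E] [SecondCountableTopology E]
    [IsProbabilityMeasure P] (hY : ∀ n, Measurable (Y n)) (hZ : Measurable Z)
    (hr : ∀ n, 0 < r n) (hr0 : Tendsto r atTop (𝓝 0)) {s K δ : ℝ} (hαs : α < s) (hs : 0 ≤ s)
    (hK : 0 < K) (hδ : 0 < δ) :
    P (controlledSet P Y Z r α K ∩ Z ⁻¹' thinSet (P.map Z) s δ) = 0 := by
  set S := controlledSet P Y Z r α K ∩ Z ⁻¹' thinSet (P.map Z) s δ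
  have hS : MeasurableSet S :=
    (measurableSet_controlledSet hY hZ K).inter (measurableSet_thinSet.preimage hZ)
  have hscale : Tendsto (fun n => 4 * ((K + 1) * r n)) atTop (𝓝 0) := by
    simpa using (hr0.const_mul (K + 1)).const_mul 4
  refine eq_zero_of_eventually_mul_ofReal_le (l := atTop) (a := fun n => r n ^ α / K)
    (b := fun n => (4 * ((K + 1) * r n)) ^ s) (fun n => by have := hr n; positivity) ?_ ?_
  · filter_upwards [hscale.eventually (ge_mem_nhds hδ)] with n hn
    refine measure_mul_le_of_forall_ball P (hY n) hS (fun ω hω => (hω.1 n).1)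
      (fun ω hω => (hω.1 n).2) fun z => ?_
    have hsub : S ∩ Z ⁻¹' ball z (K * r n + r n) ⊆
        Z ⁻¹' (thinSet (P.map Z) s δ ∩ ball z ((K + 1) * r n)) :=
      fun ω hω => ⟨hω.1.2, by simpa [add_mul] using hω.2⟩
    calc P (S ∩ Z ⁻¹' ball z (K * r n + r n))
        ≤ P.map Z (thinSet (P.map Z) s δ ∩ ball z ((K + 1) * r n)) := by
          rw [Measure.map_apply hZ (measurableSet_thinSet.inter measurableSet_ball)]
          exact measure_mono hsub
      _ ≤ _ := measure_thinSet_inter_ball_le hs hn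
  · have hratio : ∀ n, (4 * ((K + 1) * r n)) ^ s / (r n ^ α / K) =
        K * (4 * (K + 1)) ^ s * r n ^ (s - α) := fun n => by
      have := hr n
      rw [← mul_assoc, Real.mul_rpow (by positivity) this.le, Real.rpow_sub this]
      field_simp
    simp only [hratio]
    simpa [Real.zero_rpow (sub_pos.2 hαs).ne'] using
      (hr0.rpow_const (.inr (sub_pos.2 hαs).le)).const_mul (K * (4 * (K + 1)) ^ s)

lemma measure_map_thinSet_eq_zero [BorelSpace E] [SecondCountableTopology E]
    [IsProbabilityMeasure P] (hY : ∀ n, Measurable (Y n)) (hZ : Measurable Z) {C D : Ω → ℝ}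
    (hD : ∀ᵐ ω ∂P, 0 < D ω)
    (hr : ∀ n, 0 < r n) (hr0 : Tendsto r atTop (𝓝 0))
    (hclose : ∀ᵐ ω ∂P, ∀ n, dist (Y n ω) (Z ω) ≤ C ω * r n)
    (hmass : ∀ᵐ ω ∂P, ∀ n, D ω * r n ^ α ≤ ((P.map (Y n)) (ball (Y n ω) (r n))).toReal)
    {s δ : ℝ} (hαs : α < s) (hs : 0 ≤ s) (hδ : 0 < δ) :
    P.map Z (thinSet (P.map Z) s δ) = 0 := by
  rw [Measure.map_apply hZ measurableSet_thinSet]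
  refine measure_mono_null_ae ?_ <| measure_iUnion_null fun K : ℕ =>
    measure_controlledSet_inter_thinSet_eq_zero hY hZ hr hr0 hαs hs K.cast_add_one_pos hδ
  filter_upwards [ae_exists_mem_controlledSet hD (fun n => (hr n).le) hclose hmass]
    with ω ⟨K, hK⟩ hω
  exact mem_iUnion.2 ⟨K, hK, hω⟩

end Probability

theorem dimension_upper_bound_general {E : Type*} [MetricSpace E]
    [TopologicalSpace.SeparableSpace E] [MeasurableSpace E] [BorelSpace E]
    {Ω : Type*} [MeasurableSpace Ω] (ℙ : Measure Ω) [IsProbabilityMeasure ℙ]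
    (X : ℕ → Ω → E) (Xlim : Ω → E) (hX : ∀ n, Measurable (X n))
    (hXlim : Measurable Xlim)
    (α : ℝ) (hα : 0 < α) (C D : Ω → ℝ)
    (hCD : ∀ᵐ ω ∂ℙ, 0 < C ω ∧ 0 < D ω ∧ D ω ≤ 1)
    (r : ℕ → ℝ) (hrpos : ∀ n, 0 < r n) (hr0 : Tendsto r atTop (𝓝 0))
    (hclose : ∀ᵐ ω ∂ℙ, ∀ n, dist (X n ω) (Xlim ω) ≤ C ω * r n)
    (hmass : ∀ᵐ ω ∂ℙ, ∀ n,
      D ω * r n ^ α ≤ ((ℙ.map (X n)) (ball (X n ω) (r n))).toReal) :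
    ∀ᵐ x ∂(ℙ.map Xlim),
      Filter.liminf (fun ρ : ℝ =>
        Real.log ((ℙ.map Xlim) (ball x ρ)).toReal / Real.log ρ) (𝓝[>] 0) ≤ α := by
  have := UniformSpace.secondCountable_of_separable E
  have := Measure.isProbabilityMeasure_map (μ := ℙ) hXlim.aemeasurable
  exact ae_liminf_log_measure_ball_div_log_le fun s hs δ hδ =>
    measure_map_thinSet_eq_zero hX hXlim (hCD.mono fun _ h => h.2.1) hrpos hr0 hclose hmass
      hs (hα.trans hs).le hδ

/-- **Dimension upper bound.**
Let `(X_n)` be random variables with values in a complete separable metric space `E`,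
converging a.s. to `X`.  Let `ν_n` be the law of `X_n` and `ν` the law of `X`.  If there
are `α > 0`, positive random variables `C` and `D` with `D ≤ 1` a.s., and deterministic
positive radii `r_n → 0` such that a.s. `d(X_n, X) ≤ C r_n` and
`ν_n(B_{r_n}(X_n)) ≥ D r_n^α` for all `n`, then the dimension of `ν` is at most `α`: for
`ν`-a.e. `x`, `liminf_{r→0⁺} log ν(B_r(x)) / log r ≤ α`. -/
theorem dimension_upper_bound {E : Type*} [MetricSpace E] [CompleteSpace E]
    [TopologicalSpace.SeparableSpace E] [MeasurableSpace E] [BorelSpace E]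
    {Ω : Type*} [MeasurableSpace Ω] (ℙ : Measure Ω) [IsProbabilityMeasure ℙ]
    (X : ℕ → Ω → E) (Xlim : Ω → E) (hX : ∀ n, Measurable (X n))
    (hXlim : Measurable Xlim)
    (hconv : ∀ᵐ ω ∂ℙ, Tendsto (fun n => X n ω) atTop (𝓝 (Xlim ω)))
    (α : ℝ) (hα : 0 < α) (C D : Ω → ℝ)
    (hCD : ∀ᵐ ω ∂ℙ, 0 < C ω ∧ 0 < D ω ∧ D ω ≤ 1)
    (r : ℕ → ℝ) (hrpos : ∀ n, 0 < r n) (hr0 : Tendsto r atTop (𝓝 0))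
    (hclose : ∀ᵐ ω ∂ℙ, ∀ n, dist (X n ω) (Xlim ω) ≤ C ω * r n)
    (hmass : ∀ᵐ ω ∂ℙ, ∀ n,
      D ω * r n ^ α ≤ ((ℙ.map (X n)) (ball (X n ω) (r n))).toReal) :
    ∀ᵐ x ∂(ℙ.map Xlim),
      Filter.liminf (fun ρ : ℝ =>
        Real.log ((ℙ.map Xlim) (ball x ρ)).toReal / Real.log ρ) (𝓝[>] 0) ≤ α :=
  dimension_upper_bound_general ℙ X Xlim hX hXlim α hα C D hCD r hrpos hr0 hclose hmass
end

section
/- Let m be the normalized volume measure on the unit sphere S^{d−1}. For each μ > 0 let A_μ be a Poisson point process on S^{d−1} with intensity μ (with respect to m), and let α_μ > 0 be radii such that α_μ^{4(d−1)}·μ stays bounded away from 0 as μ → ∞. Then E[max_{p ∈ S^{d−1}} |A_μ ∩ B_{α_μ}(p)|] ≍ α_μ^{d−1}·μ as μ → ∞. -/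
/-!
Lower bound: the maximum dominates the count in one ball, a Poisson variable whose mean
`r ≍ α^{d-1} μ` is large, and such a variable is at least `r / 4` with probability `≥ 1/2`.

Upper bound: a maximal `α`-separated set gives `≲ α^{-(d-1)}` balls of radius `2α` (by packing)
such that every `α`-ball lies in one of them. Since `p(k+1) = p(k) · r / (k+1)` for the Poisson
pmf, the counts in these balls have geometric tails beyond twice their mean, so the expected
maximum is at most about twice the mean plus twice the number of balls. The growth condition
`α^{4(d-1)} μ ≥ ε` bounds both `α^{-(d-1)}` and `1` by multiples of `α^{d-1} μ`.
-/

open scoped Nat NNReal ENNReal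
open MeasureTheory Metric ProbabilityTheory Filter Finset

namespace MeasureTheory

lemma natCast_le_add_tsum_indicator {α : Type*} (Y : α → ℕ) (n : ℕ) {E : ℕ → Set α}
    (hE : ∀ j, {x | n + j < Y x} ⊆ E j) (x : α) :
    (Y x : ℝ≥0∞) ≤ n + ∑' j, (E j).indicator 1 x := by
  have hone (j : ℕ) (hj : j ∈ range (Y x - n)) : (1 : ℝ≥0∞) ≤ (E j).indicator 1 x := by
    have : x ∈ E j := hE j (show n + j < Y x by simp only [mem_range] at hj; omega)
    simp [this]
  calc (Y x : ℝ≥0∞) ≤ n + (Y x - n : ℕ) := by norm_cast; omega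
    _ = n + ∑ j ∈ range (Y x - n), (1 : ℝ≥0∞) := by simp
    _ ≤ n + ∑' j, (E j).indicator 1 x := by
      gcongr
      exact (sum_le_sum hone).trans (ENNReal.sum_le_tsum _)

variable {Ω ι : Type*} [MeasurableSpace Ω] {P : Measure Ω} [IsProbabilityMeasure P]

lemma natCast_mul_one_sub_measure_le_lintegral (Y : Ω → ℕ) (n : ℕ) :
    n * (1 - P {ω | Y ω < n}) ≤ ∫⁻ ω, (Y ω : ℝ≥0∞) ∂P := by
  set F := toMeasurable P {ω | Y ω < n}
  have hF : MeasurableSet F := measurableSet_toMeasurable _ _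
  have hY : Fᶜ.indicator (fun _ => (n : ℝ≥0∞)) ≤ fun ω => (Y ω : ℝ≥0∞) := by
    intro ω
    by_cases hω : ω ∈ F
    · simp [hω]
    · have : n ≤ Y ω := not_lt.1 fun h => hω (subset_toMeasurable P _ h)
      simpa [hω] using this
  calc (n : ℝ≥0∞) * (1 - P {ω | Y ω < n})
      = ∫⁻ ω, Fᶜ.indicator (fun _ => (n : ℝ≥0∞)) ω ∂P := by
        rw [lintegral_indicator_const hF.compl, prob_compl_eq_one_sub hF, measure_toMeasurable]
    _ ≤ ∫⁻ ω, (Y ω : ℝ≥0∞) ∂P := lintegral_mono hY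

lemma lintegral_finsetSup_le_add_tsum (T : Finset ι) (Y : ι → Ω → ℕ) (n : ℕ) :
    ∫⁻ ω, T.sup (fun t => (Y t ω : ℝ≥0∞)) ∂P ≤ n + ∑ t ∈ T, ∑' j, P {ω | n + j < Y t ω} := by
  set E : ι → ℕ → Set Ω := fun t j => toMeasurable P {ω | n + j < Y t ω}
  have hE (t : ι) (j : ℕ) : MeasurableSet (E t j) := measurableSet_toMeasurable _ _
  have hsup (ω : Ω) :
      T.sup (fun t => (Y t ω : ℝ≥0∞)) ≤ n + ∑ t ∈ T, ∑' j, (E t j).indicator 1 ω :=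
    Finset.sup_le fun t ht =>
      (natCast_le_add_tsum_indicator (Y t) n (fun j => subset_toMeasurable P _) ω).trans <| by
        gcongr
        exact single_le_sum (f := fun t => ∑' j, (E t j).indicator 1 ω) (fun _ _ => zero_le) ht
  calc ∫⁻ ω, T.sup (fun t => (Y t ω : ℝ≥0∞)) ∂P
      ≤ ∫⁻ ω, n + ∑ t ∈ T, ∑' j, (E t j).indicator 1 ω ∂P := lintegral_mono hsup
    _ = n + ∑ t ∈ T, ∑' j, P (E t j) := by
      rw [lintegral_add_left measurable_const, lintegral_const, measure_univ, mul_one,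
        lintegral_finsetSum _ fun t _ =>
          Measurable.tsum fun j => measurable_one.indicator (hE t j)]
      simp_rw [lintegral_tsum fun j => (measurable_one.indicator (hE _ j)).aemeasurable]
      simp [lintegral_indicator_one (hE _ _)]
    _ = n + ∑ t ∈ T, ∑' j, P {ω | n + j < Y t ω} := by simp only [E, measure_toMeasurable]

lemma card_mul_le_one_of_pairwiseDisjoint {N : Finset ι}
    {f : ι → Set Ω} (hf : ∀ i ∈ N, MeasurableSet (f i)) (hd : (N : Set ι).PairwiseDisjoint f)
    {v : ℝ} (hv : ∀ i ∈ N, ENNReal.ofReal v ≤ P (f i)) : N.card * v ≤ 1 := by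
  rw [← ENNReal.ofReal_le_one, ENNReal.ofReal_mul (by positivity), ENNReal.ofReal_natCast,
    ← nsmul_eq_mul, ← sum_const]
  calc ∑ i ∈ N, ENNReal.ofReal v ≤ ∑ i ∈ N, P (f i) := sum_le_sum hv
    _ = P (⋃ i ∈ N, f i) := (measure_biUnion_finset hd hf).symm
    _ ≤ 1 := prob_le_one

end MeasureTheory

namespace ProbabilityTheory

variable {r : ℝ≥0} {n : ℕ}

lemma poissonMeasure_real_singleton_succ (r : ℝ≥0) (n : ℕ) :
    Po(r).real {n + 1} = Po(r).real {n} * (r / (n + 1)) := by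
  simp only [poissonMeasure_real_singleton, pow_succ, Nat.factorial_succ, Nat.cast_mul,
    Nat.cast_succ]
  field_simp

lemma sum_range_poissonMeasure_real_le (h : 2 * n ≤ (r : ℝ)) :
    ∑ k ∈ range n, Po(r).real {k} ≤ Po(r).real {n} := by
  induction n with
  | zero => simp
  | succ n ih =>
    have hr : 2 ≤ (r : ℝ) / (n + 1) := by
      rw [le_div_iff₀ (by positivity)]; push_cast at h; linarith
    rw [sum_range_succ, poissonMeasure_real_singleton_succ]
    have := ih (by push_cast at h; linarith)
    nlinarith [measureReal_nonneg (μ := Po(r)) (s := {n})]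

lemma poissonMeasure_real_singleton_add_le (h : 2 * (r : ℝ) ≤ n + 1) (j : ℕ) :
    Po(r).real {n + j} ≤ 2⁻¹ ^ j * Po(r).real {n} := by
  induction j with
  | zero => simp
  | succ j ih =>
    have hr : (r : ℝ) / (n + j + 1) ≤ 2⁻¹ := by
      rw [div_le_iff₀ (by positivity)]; linarith
    rw [← add_assoc, poissonMeasure_real_singleton_succ, pow_succ]
    push_cast
    calc Po(r).real {n + j} * (r / (n + j + 1)) ≤ Po(r).real {n + j} * 2⁻¹ := by gcongr
      _ ≤ _ := by nlinarith

lemma poissonMeasure_Iio_le (h : 2 * (n + 1) ≤ (r : ℝ)) : Po(r) (Set.Iio n) ≤ 2⁻¹ := by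
  have hsum : ∑ k ∈ range n, Po(r).real {k} + Po(r).real {n} ≤ 1 := by
    rw [← sum_range_succ]
    exact (sum_range_poissonMeasure_real_le (by exact_mod_cast h)).trans measureReal_le_one
  have hle := sum_range_poissonMeasure_real_le (r := r) (n := n) (by linarith)
  rw [← ofReal_measureReal, ← coe_range, ← sum_measureReal_singleton,
    ← ENNReal.ofReal_ofNat 2, ← ENNReal.ofReal_inv_of_pos two_pos]
  exact ENNReal.ofReal_le_ofReal (by linarith)

lemma poissonMeasure_Ioi_le (h : 2 * (r : ℝ) ≤ n + 1) (j : ℕ) :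
    Po(r) (Set.Ioi (n + j)) ≤ 2⁻¹ ^ j := by
  have hsub : Set.Ioi (n + j) ⊆ ⋃ i, {n + (j + 1 + i)} := fun k hk =>
    Set.mem_iUnion.2 ⟨k - (n + j + 1), by
      rw [Set.mem_singleton_iff]; rw [Set.mem_Ioi] at hk; omega⟩
  have hpt (i : ℕ) : Po(r) {n + (j + 1 + i)} ≤ 2⁻¹ ^ (j + 1 + i) := by
    rw [← ofReal_measureReal, ← ENNReal.ofReal_ofNat 2, ← ENNReal.ofReal_inv_of_pos two_pos,
      ← ENNReal.ofReal_pow (by norm_num)]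
    refine ENNReal.ofReal_le_ofReal ((poissonMeasure_real_singleton_add_le h _).trans ?_)
    exact mul_le_of_le_one_right (by positivity) measureReal_le_one
  calc Po(r) (Set.Ioi (n + j)) ≤ ∑' i, Po(r) {n + (j + 1 + i)} :=
        (measure_mono hsub).trans (measure_iUnion_le _)
    _ ≤ ∑' i, (2⁻¹ : ℝ≥0∞) ^ (j + 1 + i) := ENNReal.tsum_le_tsum hpt
    _ = 2⁻¹ ^ j := by
      simp_rw [pow_add, ENNReal.tsum_mul_left, ENNReal.tsum_geometric, ENNReal.one_sub_inv_two,
        inv_inv, pow_one, mul_assoc, ENNReal.inv_mul_cancel two_ne_zero ENNReal.ofNat_ne_top,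
        mul_one]

variable {Ω ι : Type*} [MeasurableSpace Ω] {P : Measure Ω}

/-- No measurability of `Y` is assumed: on non-measurable fibres `P` acts as an outer measure. -/
def IsPoissonCount (P : Measure Ω) (Y : Ω → ℕ) (r : ℝ≥0) : Prop :=
  ∀ n, P (Y ⁻¹' {n}) = Po(r) {n}

lemma IsPoissonCount.measure_preimage_le {Y : Ω → ℕ} (hY : IsPoissonCount P Y r) (s : Set ℕ) :
    P (Y ⁻¹' s) ≤ Po(r) s :=
  calc P (Y ⁻¹' s) = P (⋃ k ∈ s, Y ⁻¹' {k}) := by rw [Set.biUnion_preimage_singleton]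
    _ ≤ ∑' k : s, P (Y ⁻¹' {(k : ℕ)}) := measure_biUnion_le P s.to_countable _
    _ = ∑' k : s, Po(r) {(k : ℕ)} := tsum_congr fun k => hY k
    _ = Po(r) s := by
      simpa using tsum_measure_preimage_singleton (μ := Po(r)) s.to_countable (f := id)
        fun _ _ => measurableSet_singleton _

variable [IsProbabilityMeasure P]

lemma IsPoissonCount.ofReal_div_eight_le_lintegral {Y : Ω → ℕ} (hY : IsPoissonCount P Y r)
    (hr : 8 ≤ (r : ℝ)) : ENNReal.ofReal (r / 8) ≤ ∫⁻ ω, (Y ω : ℝ≥0∞) ∂P := by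
  set n := ⌈(r : ℝ) / 4⌉₊
  have hn : (r : ℝ) / 4 ≤ n := Nat.le_ceil _
  have hn' : 2 * ((n : ℝ) + 1) ≤ r := by
    linarith [Nat.ceil_lt_add_one (by positivity : (0 : ℝ) ≤ r / 4)]
  have hhead : P {ω | Y ω < n} ≤ 2⁻¹ :=
    (hY.measure_preimage_le (Set.Iio n)).trans (poissonMeasure_Iio_le hn')
  refine le_trans ?_ (natCast_mul_one_sub_measure_le_lintegral Y n)
  calc ENNReal.ofReal (r / 8) ≤ ENNReal.ofReal (n * 2⁻¹) :=
        ENNReal.ofReal_le_ofReal (by linarith)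
    _ = n * (1 - 2⁻¹) := by
      rw [ENNReal.one_sub_inv_two, ENNReal.ofReal_mul (by positivity), ENNReal.ofReal_natCast,
        ENNReal.ofReal_inv_of_pos two_pos, ENNReal.ofReal_ofNat]
    _ ≤ n * (1 - P {ω | Y ω < n}) := by gcongr

lemma IsPoissonCount.lintegral_finsetSup_le {T : Finset ι} {Y : ι → Ω → ℕ} {r : ι → ℝ≥0}
    (hY : ∀ t ∈ T, IsPoissonCount P (Y t) (r t)) (hn : ∀ t ∈ T, 2 * (r t : ℝ) ≤ n + 1) :
    ∫⁻ ω, T.sup (fun t => (Y t ω : ℝ≥0∞)) ∂P ≤ n + 2 * T.card := by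
  have htail (t : ι) (ht : t ∈ T) : ∑' j, P {ω | n + j < Y t ω} ≤ 2 :=
    calc ∑' j, P {ω | n + j < Y t ω} ≤ ∑' j : ℕ, (2⁻¹ : ℝ≥0∞) ^ j :=
          ENNReal.tsum_le_tsum fun j => ((hY t ht).measure_preimage_le (Set.Ioi (n + j))).trans
            (poissonMeasure_Ioi_le (hn t ht) j)
      _ = 2 := by rw [ENNReal.tsum_geometric, ENNReal.one_sub_inv_two, inv_inv]
  calc ∫⁻ ω, T.sup (fun t => (Y t ω : ℝ≥0∞)) ∂P ≤ n + ∑ t ∈ T, ∑' j, P {ω | n + j < Y t ω} :=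
        lintegral_finsetSup_le_add_tsum T Y n
    _ ≤ n + ∑ t ∈ T, 2 := by gcongr with t ht; exact htail t ht
    _ = n + 2 * T.card := by rw [sum_const, nsmul_eq_mul, mul_comm]

section PointProcess

variable {S κ : Type*} {X : Ω → Set S} {U : κ → Set S}

lemma lintegral_iSup_ncard_le (hfin : ∀ᵐ ω ∂P, (X ω).Finite) {T : Finset (Set S)}
    (hT : ∀ i, ∃ A ∈ T, U i ⊆ A) {r : Set S → ℝ≥0}
    (hX : ∀ A ∈ T, IsPoissonCount P (fun ω => (X ω ∩ A).ncard) (r A))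
    (hn : ∀ A ∈ T, 2 * (r A : ℝ) ≤ n + 1) :
    ∫⁻ ω, ⨆ i, ((X ω ∩ U i).ncard : ℝ≥0∞) ∂P ≤ n + 2 * T.card := by
  refine le_trans (lintegral_mono_ae ?_) (IsPoissonCount.lintegral_finsetSup_le hX hn)
  filter_upwards [hfin] with ω hω
  refine iSup_le fun i => ?_
  obtain ⟨A, hA, hUA⟩ := hT i
  calc ((X ω ∩ U i).ncard : ℝ≥0∞) ≤ (X ω ∩ A).ncard := by
        gcongr
        exact hω.subset Set.inter_subset_left
    _ ≤ T.sup fun A => ((X ω ∩ A).ncard : ℝ≥0∞) :=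
        le_sup (f := fun A => ((X ω ∩ A).ncard : ℝ≥0∞)) hA

variable [MeasurableSpace S] {m : Measure S} {μ v : ℝ}

lemma ofReal_le_lintegral_iSup_ncard [IsFiniteMeasure m] (i₀ : κ)
    (hX : IsPoissonCount P (fun ω => (X ω ∩ U i₀).ncard) (μ * (m (U i₀)).toReal).toNNReal)
    (hμ : 0 ≤ μ) (hv : ENNReal.ofReal v ≤ m (U i₀)) (h8 : 8 ≤ μ * v) :
    ENNReal.ofReal (μ * v / 8) ≤ ∫⁻ ω, ⨆ i, ((X ω ∩ U i).ncard : ℝ≥0∞) ∂P := by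
  have hmean : μ * v ≤ (μ * (m (U i₀)).toReal).toNNReal := by
    rw [Real.coe_toNNReal _ (by positivity)]
    gcongr
    exact (ENNReal.ofReal_le_iff_le_toReal (measure_ne_top _ _)).1 hv
  calc ENNReal.ofReal (μ * v / 8) ≤ ENNReal.ofReal ((μ * (m (U i₀)).toReal).toNNReal / 8) :=
        ENNReal.ofReal_le_ofReal (by linarith)
    _ ≤ ∫⁻ ω, ((X ω ∩ U i₀).ncard : ℝ≥0∞) ∂P :=
        hX.ofReal_div_eight_le_lintegral (h8.trans hmean)
    _ ≤ ∫⁻ ω, ⨆ i, ((X ω ∩ U i).ncard : ℝ≥0∞) ∂P :=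
        lintegral_mono fun ω => le_iSup (fun i => ((X ω ∩ U i).ncard : ℝ≥0∞)) i₀

lemma lintegral_iSup_ncard_le_ofReal (hfin : ∀ᵐ ω ∂P, (X ω).Finite) {T : Finset (Set S)}
    (hT : ∀ i, ∃ A ∈ T, U i ⊆ A)
    (hX : ∀ A ∈ T, IsPoissonCount P (fun ω => (X ω ∩ A).ncard) (μ * (m A).toReal).toNNReal)
    (hμ : 0 ≤ μ) (hv : 0 ≤ v) (hmA : ∀ A ∈ T, m A ≤ ENNReal.ofReal v) :
    ∫⁻ ω, ⨆ i, ((X ω ∩ U i).ncard : ℝ≥0∞) ∂P ≤ ENNReal.ofReal (2 * μ * v + 1 + 2 * T.card) := by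
  have hn (A : Set S) (hA : A ∈ T) :
      2 * ((μ * (m A).toReal).toNNReal : ℝ) ≤ ⌈2 * μ * v⌉₊ + 1 := by
    rw [Real.coe_toNNReal _ (by positivity)]
    have := ENNReal.toReal_le_of_le_ofReal hv (hmA A hA)
    have := Nat.le_ceil (2 * μ * v)
    nlinarith
  refine (lintegral_iSup_ncard_le hfin hT hX hn).trans ?_
  have hceil := Nat.ceil_lt_add_one (by positivity : 0 ≤ 2 * μ * v)
  calc (⌈2 * μ * v⌉₊ : ℝ≥0∞) + 2 * T.card = ENNReal.ofReal (⌈2 * μ * v⌉₊ + 2 * T.card) := by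
        rw [ENNReal.ofReal_add (by positivity) (by positivity), ENNReal.ofReal_natCast,
          ENNReal.ofReal_mul zero_le_two, ENNReal.ofReal_natCast, ENNReal.ofReal_ofNat]
    _ ≤ ENNReal.ofReal (2 * μ * v + 1 + 2 * T.card) := ENNReal.ofReal_le_ofReal (by linarith)

end PointProcess

end ProbabilityTheory

namespace Metric

lemma exists_finite_isSeparated_isCover {X : Type*} [PseudoEMetricSpace X] [CompactSpace X]
    {ε : ℝ≥0} (hε : ε ≠ 0) :
    ∃ N : Set X, N.Finite ∧ IsSeparated ε N ∧ IsCover ε Set.univ N := by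
  obtain ⟨C, -, hCfin, hC⟩ :=
    exists_finite_isCover_of_isCompact (ε := ε / 2) (by positivity) (isCompact_univ (X := X))
  have hpack : packingNumber ε (Set.univ : Set X) ≠ ⊤ := by
    refine ne_top_of_le_ne_top (Set.encard_ne_top_iff.2 hCfin) ?_
    calc packingNumber ε (Set.univ : Set X) = packingNumber (2 * (ε / 2)) Set.univ := by
          rw [mul_div_cancel₀ _ two_ne_zero]
      _ ≤ externalCoveringNumber (ε / 2) Set.univ :=
          packingNumber_two_mul_le_externalCoveringNumber _ _
      _ ≤ C.encard := hC.externalCoveringNumber_le_encard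
  refine ⟨maximalSeparatedSet ε Set.univ, ?_, isSeparated_maximalSeparatedSet,
    isCover_maximalSeparatedSet hpack⟩
  rw [← Set.encard_ne_top_iff, encard_maximalSeparatedSet hpack]
  exact hpack

lemma exists_finset_cover_pairwiseDisjoint_ball {X : Type*} [MetricSpace X] [CompactSpace X]
    {a : ℝ} (ha : 0 < a) : ∃ N : Finset X,
      (∀ p, ∃ t ∈ N, dist p t ≤ a) ∧ (N : Set X).PairwiseDisjoint (ball · (a / 2)) := by
  obtain ⟨N, hNfin, hsep, hcov⟩ :=
    exists_finite_isSeparated_isCover (X := X) (ε := a.toNNReal) (by simpa using ha)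
  refine ⟨hNfin.toFinset, fun p => ?_, fun x hx y hy hxy => ?_⟩
  · obtain ⟨t, ht, hpt⟩ := hcov (Set.mem_univ p)
    have hpt : edist p t ≤ ENNReal.ofReal a := hpt
    rw [edist_dist, ENNReal.ofReal_le_ofReal_iff ha.le] at hpt
    exact ⟨t, hNfin.mem_toFinset.2 ht, hpt⟩
  · have hxy : ENNReal.ofReal a < edist x y := hsep (by simpa using hx) (by simpa using hy) hxy
    rw [edist_dist, ENNReal.ofReal_lt_ofReal_iff_of_nonneg ha.le] at hxy
    exact ball_disjoint_ball (by linarith)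

variable {S : Type*} [MetricSpace S] [CompactSpace S] [MeasurableSpace S]
  [OpensMeasurableSpace S] {m : Measure S} [IsProbabilityMeasure m] {D : ℕ} {R k₁ k₂ : ℝ}

lemma exists_finset_cover_ball_two_mul (hk₁ : 0 < k₁)
    (hlow : ∀ p α, 0 < α → α ≤ R → ENNReal.ofReal (k₁ * α ^ D) ≤ m (ball p α))
    (hup : ∀ p α, 0 < α → α ≤ R → m (ball p α) ≤ ENNReal.ofReal (k₂ * α ^ D))
    {a : ℝ} (ha : 0 < a) (h2a : 2 * a ≤ R) : ∃ T : Finset (Set S),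
      (∀ A ∈ T, MeasurableSet A ∧ m A ≤ ENNReal.ofReal (k₂ * 2 ^ D * a ^ D)) ∧
      (T.card : ℝ) * a ^ D ≤ 2 ^ D / k₁ ∧ ∀ p, ∃ A ∈ T, ball p a ⊆ A := by
  classical
  obtain ⟨N, hcov, hdisj⟩ := exists_finset_cover_pairwiseDisjoint_ball (X := S) ha
  refine ⟨N.image (ball · (2 * a)), ?_, ?_, fun p => ?_⟩
  · simp only [mem_image, forall_exists_index, and_imp, forall_apply_eq_imp_iff₂]
    refine fun t _ => ⟨measurableSet_ball, ?_⟩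
    rw [mul_assoc, ← mul_pow]
    exact hup t _ (by positivity) h2a
  · have hpack := card_mul_le_one_of_pairwiseDisjoint (fun t _ => measurableSet_ball) hdisj
      fun t _ => hlow t (a / 2) (by positivity) (by linarith)
    rw [div_pow, mul_div, mul_div_assoc', div_le_iff₀ (by positivity)] at hpack
    rw [le_div_iff₀ hk₁]
    calc ((N.image (ball · (2 * a))).card : ℝ) * a ^ D * k₁ ≤ N.card * k₁ * a ^ D := by
          rw [mul_right_comm]; gcongr; exact_mod_cast card_image_le
      _ ≤ 2 ^ D := by linarith
  · obtain ⟨t, ht, hpt⟩ := hcov p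
    refine ⟨ball t (2 * a), mem_image_of_mem _ ht, fun y hy => ?_⟩
    rw [mem_ball] at hy ⊢
    linarith [dist_triangle y p t]

lemma exists_finset_cover_measure_le (hR : 0 < R) (hk₁ : 0 < k₁)
    (hlow : ∀ p α, 0 < α → α ≤ R → ENNReal.ofReal (k₁ * α ^ D) ≤ m (ball p α))
    (hup : ∀ p α, 0 < α → α ≤ R → m (ball p α) ≤ ENNReal.ofReal (k₂ * α ^ D)) :
    ∃ K > 0, ∀ a, 0 < a → a ≤ R → ∃ T : Finset (Set S),
      (∀ A ∈ T, MeasurableSet A ∧ m A ≤ ENNReal.ofReal (K * a ^ D)) ∧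
      (T.card : ℝ) ≤ K / a ^ D ∧ ∀ p, ∃ A ∈ T, ball p a ⊆ A := by
  refine ⟨max (max (k₂ * 2 ^ D) (2 ^ D / k₁)) (max ((2 / R) ^ D) (R ^ D)), by positivity,
    fun a ha haR => ?_⟩
  rcases le_or_gt (2 * a) R with h2a | h2a
  · obtain ⟨T, hTm, hTcard, hTcov⟩ := exists_finset_cover_ball_two_mul hk₁ hlow hup ha h2a
    refine ⟨T, fun A hA => ⟨(hTm A hA).1, (hTm A hA).2.trans (ENNReal.ofReal_le_ofReal ?_)⟩,
      (le_div_iff₀ (by positivity)).2 (hTcard.trans (by simp)), hTcov⟩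
    gcongr
    simp
  · refine ⟨{Set.univ}, ?_, ?_, fun p => ⟨Set.univ, mem_singleton_self _, Set.subset_univ _⟩⟩
    · have : 1 ≤ (2 / R) ^ D * a ^ D := by
        rw [← mul_pow]
        exact one_le_pow₀ (by rw [div_mul_eq_mul_div, le_div_iff₀ hR]; linarith)
      simpa using this.trans (by gcongr; simp)
    · rw [card_singleton, Nat.cast_one, le_div_iff₀ (by positivity), one_mul]
      simpa using Or.inr (Or.inr (pow_le_pow_left₀ ha.le haR D))

end Metric

lemma le_mul_of_le_pow_four_mul {b μ ε M : ℝ} (hb : 0 ≤ b) (hμ : 1 ≤ μ)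
    (hε : ε ≤ b ^ 4 * μ) (hM : M ^ 4 ≤ ε * μ) : M ≤ b * μ := by
  have hε0 : 0 ≤ ε :=
    nonneg_of_mul_nonneg_left ((by positivity : 0 ≤ M ^ 4).trans hM) (by linarith)
  refine le_of_pow_le_pow_left₀ four_ne_zero (by positivity) ?_
  calc M ^ 4 ≤ ε * μ := hM
    _ ≤ ε * μ ^ 3 := by gcongr; exact le_self_pow₀ hμ (by norm_num)
    _ ≤ b ^ 4 * μ * μ ^ 3 := mul_le_mul_of_nonneg_right hε (by positivity)
    _ = (b * μ) ^ 4 := by ring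

lemma inv_le_mul_of_le_pow_four_mul {b B μ ε : ℝ} (hb : 0 < b) (hbB : b ≤ B) (hε : 0 < ε)
    (h : ε ≤ b ^ 4 * μ) : b⁻¹ ≤ B ^ 2 / ε * (b * μ) := by
  have hμ : 0 ≤ μ := nonneg_of_mul_nonneg_right (hε.le.trans h) (by positivity)
  rw [inv_le_iff_one_le_mul₀ hb, show B ^ 2 / ε * (b * μ) * b = B ^ 2 * b ^ 2 * μ / ε by ring,
    le_div_iff₀ hε]
  calc 1 * ε ≤ b ^ 2 * b ^ 2 * μ := by linarith
    _ ≤ B ^ 2 * b ^ 2 * μ := by gcongr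

lemma eventually_le_pow_mul_and_inv_le {α : ℝ → ℝ} {D : ℕ} {B ε : ℝ} (hε : 0 < ε)
    (hα : ∀ μ, 0 < α μ ∧ α μ ≤ B) (hev : ∀ᶠ μ in atTop, ε ≤ α μ ^ (4 * D) * μ) (M : ℝ) :
    ∀ᶠ μ in atTop, M ≤ α μ ^ D * μ ∧ (α μ ^ D)⁻¹ ≤ (B ^ D) ^ 2 / ε * (α μ ^ D * μ) := by
  filter_upwards [hev, eventually_ge_atTop (max 1 (max 0 M ^ 4 / ε))] with μ hεμ hμ
  rw [mul_comm 4, pow_mul] at hεμ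
  obtain ⟨ha, haB⟩ := hα μ
  refine ⟨(le_max_right 0 M).trans (le_mul_of_le_pow_four_mul (by positivity)
    (le_of_max_le_left hμ) hεμ ?_), inv_le_mul_of_le_pow_four_mul (by positivity)
      (pow_le_pow_left₀ ha.le haB D) hε hεμ⟩
  rw [← div_le_iff₀' hε]
  exact le_of_max_le_right hμ

theorem poisson_sphere_max_count_general
    (d : ℕ)
    {S : Type*} [MetricSpace S] [CompactSpace S] [MeasurableSpace S] [BorelSpace S]
    (m : Measure S) (hm : IsProbabilityMeasure m)
    (hball : ∃ k₁ k₂ : ℝ, 0 < k₁ ∧ 0 < k₂ ∧ ∀ (p : S) (α : ℝ), 0 < α → α ≤ Real.pi →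
      ENNReal.ofReal (k₁ * α ^ (d - 1)) ≤ m (ball p α) ∧
      m (ball p α) ≤ ENNReal.ofReal (k₂ * α ^ (d - 1)))
    {Ω : Type*} [MeasurableSpace Ω] (Pr : Measure Ω) [IsProbabilityMeasure Pr]
    (X : ℝ → Ω → Set S)
    (hfin : ∀ μ : ℝ, 0 < μ → ∀ᵐ ω ∂Pr, (X μ ω).Finite)
    -- Poisson counts:
    (hcounts : ∀ μ : ℝ, 0 < μ → ∀ A : Set S, MeasurableSet A → ∀ n : ℕ,
      Pr {ω | (X μ ω ∩ A).ncard = n} =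
        ENNReal.ofReal (poissonPMFReal (μ * (m A).toReal).toNNReal n))
    (α : ℝ → ℝ) (hα : ∀ μ : ℝ, 0 < α μ ∧ α μ ≤ Real.pi)
    (haway : ∃ ε > (0 : ℝ), ∀ᶠ μ in atTop, ε ≤ α μ ^ (4 * (d - 1)) * μ) :
    ∃ c C : ℝ, 0 < c ∧ 0 < C ∧ ∀ᶠ μ in atTop,
      ENNReal.ofReal (c * α μ ^ (d - 1) * μ) ≤
          ∫⁻ ω, ⨆ p : S, ((X μ ω ∩ ball p (α μ)).ncard : ENNReal) ∂Pr ∧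
        ∫⁻ ω, ⨆ p : S, ((X μ ω ∩ ball p (α μ)).ncard : ENNReal) ∂Pr ≤
          ENNReal.ofReal (C * α μ ^ (d - 1) * μ) := by
  have := hm
  obtain ⟨k₁, k₂, hk₁, -, hball⟩ := hball
  obtain ⟨ε, hε, hev⟩ := haway
  obtain ⟨K, hK, hcover⟩ := exists_finset_cover_measure_le (m := m) Real.pi_pos hk₁
    (fun p a h h' => (hball p a h h').1) (fun p a h h' => (hball p a h h').2)
  obtain ⟨p₀⟩ := nonempty_of_isProbabilityMeasure m
  have hX (μ : ℝ) (hμ : 0 < μ) (A : Set S) (hA : MeasurableSet A) :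
      IsPoissonCount Pr (fun ω => (X μ ω ∩ A).ncard) (μ * (m A).toReal).toNNReal := fun n =>
    (hcounts μ hμ A hA n).trans (poissonMeasure_singleton _ n).symm
  refine ⟨k₁ / 8, 2 * K + 1 + 2 * K * ((Real.pi ^ (d - 1)) ^ 2 / ε), by positivity,
    by positivity, ?_⟩
  filter_upwards [eventually_le_pow_mul_and_inv_le hε hα hev (max 1 (8 / k₁)),
    eventually_gt_atTop 0] with μ ⟨hx, hinv⟩ hμ0
  obtain ⟨ha, haπ⟩ := hα μ
  constructor
  · have h8 : 8 ≤ μ * (k₁ * α μ ^ (d - 1)) := by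
      have := (le_max_right _ _).trans hx
      rw [div_le_iff₀ hk₁] at this
      linarith
    convert ofReal_le_lintegral_iSup_ncard (U := fun p => ball p (α μ)) p₀
      (hX μ hμ0 _ measurableSet_ball) hμ0.le (hball p₀ _ ha haπ).1 h8 using 2
    ring
  · obtain ⟨T, hTm, hTcard, hTcov⟩ := hcover (α μ) ha haπ
    refine (lintegral_iSup_ncard_le_ofReal (hfin μ hμ0) hTcov
      (fun A hA => hX μ hμ0 A (hTm A hA).1) hμ0.le (by positivity)
      fun A hA => (hTm A hA).2).trans (ENNReal.ofReal_le_ofReal ?_)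
    rw [div_eq_mul_inv] at hTcard
    nlinarith [le_of_max_le_left hx, mul_le_mul_of_nonneg_left hinv hK.le]

/-- **Maximal local number of points of a Poisson process on the sphere.**
Let `m` be the normalized volume measure on the unit sphere `S^{d−1}` (a probability
measure whose balls of radius `α ≤ π` have measure `≍ α^{d−1}`).  For each `μ > 0` let
`A_μ` be a Poisson point process on the sphere with intensity `μ` (w.r.t. `m`), and let
`α_μ > 0` be radii with `α_μ^{4(d−1)} μ` bounded away from `0` as `μ → ∞`.  Then
`E[max_p |A_μ ∩ B_{α_μ}(p)|] ≍ α_μ^{d−1} μ` as `μ → ∞`. -/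
theorem poisson_sphere_max_count
    (d : ℕ) (hd : 2 ≤ d)
    {S : Type*} [MetricSpace S] [CompactSpace S] [MeasurableSpace S] [BorelSpace S]
    (m : Measure S) (hm : IsProbabilityMeasure m)
    (hball : ∃ k₁ k₂ : ℝ, 0 < k₁ ∧ 0 < k₂ ∧ ∀ (p : S) (α : ℝ), 0 < α → α ≤ Real.pi →
      ENNReal.ofReal (k₁ * α ^ (d - 1)) ≤ m (ball p α) ∧
      m (ball p α) ≤ ENNReal.ofReal (k₂ * α ^ (d - 1)))
    {Ω : Type*} [MeasurableSpace Ω] (Pr : Measure Ω) [IsProbabilityMeasure Pr]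
    (X : ℝ → Ω → Set S)
    (hfin : ∀ μ : ℝ, 0 < μ → ∀ᵐ ω ∂Pr, (X μ ω).Finite)
    -- Poisson counts:
    (hcounts : ∀ μ : ℝ, 0 < μ → ∀ A : Set S, MeasurableSet A → ∀ n : ℕ,
      Pr {ω | (X μ ω ∩ A).ncard = n} =
        ENNReal.ofReal (poissonPMFReal (μ * (m A).toReal).toNNReal n))
    -- independence of counts over disjoint sets:
    (hindep : ∀ μ : ℝ, 0 < μ → ∀ {ι : Type} (A : ι → Set S),
      (∀ i, MeasurableSet (A i)) → Pairwise (Function.onFun Disjoint A) →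
      iIndepFun
        (fun i ω => (X μ ω ∩ A i).ncard) Pr)
    (α : ℝ → ℝ) (hα : ∀ μ : ℝ, 0 < α μ ∧ α μ ≤ Real.pi)
    (haway : ∃ ε > (0 : ℝ), ∀ᶠ μ in atTop, ε ≤ α μ ^ (4 * (d - 1)) * μ) :
    ∃ c C : ℝ, 0 < c ∧ 0 < C ∧ ∀ᶠ μ in atTop,
      ENNReal.ofReal (c * α μ ^ (d - 1) * μ) ≤
          ∫⁻ ω, ⨆ p : S, ((X μ ω ∩ ball p (α μ)).ncard : ENNReal) ∂Pr ∧
        ∫⁻ ω, ⨆ p : S, ((X μ ω ∩ ball p (α μ)).ncard : ENNReal) ∂Pr ≤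
          ENNReal.ofReal (C * α μ ^ (d - 1) * μ) :=
  poisson_sphere_max_count_general d m hm hball Pr X hfin hcounts α hα haway
end
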